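/- arXiv:2403.18738 — 4 statements merged into one kernel-verified Lean document; each statement's English description precedes it below -/
import Mathlib

section
/- Let j ≥ 2 and let f : ∂Q^j → N be a map from the boundary of the unit cube Q^j = [-1,1]^j to a metric space N. Define F : Q^j \ {0} → N by F(x) = f(x/|x|_∞). Then for every x ∈ Q^j \ {0}, the Lipschitz number satisfies |x| · Lip F(x) ≤ j · sup_{y ∈ ∂Q^j} Lip f(y), where Lip g(x) = limsup_{y→x} d(g(y), g(x))/|y - x|. -/
open Filter

open scoped ENNReal

/-- The supremum norm on `ℝ^j` (via the identification of `EuclideanSpace` with the Pi type). -/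
noncomputable def supNorm {j : ℕ} (x : EuclideanSpace ℝ (Fin j)) : ℝ :=
  ‖(WithLp.equiv 2 (Fin j → ℝ)) x‖

/-- The Lipschitz number `Lip f (x)` of `f` at `x` relative to the set `s`:
`limsup_{y → x, y ∈ s \ {x}} d(f y, f x) / d(y, x)` (valued in `[0,∞]`, equal to `0`
at isolated points since the limsup along the bottom filter is `⊥ = 0`). -/
noncomputable def lipNumOn {E N : Type*} [PseudoEMetricSpace E] [PseudoEMetricSpace N]
    (f : E → N) (s : Set E) (x : E) : ℝ≥0∞ :=
  Filter.limsup (fun y => edist (f y) (f x) / edist y x) (nhdsWithin x (s \ {x}))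

/-!
Write `r y = y / ‖y‖_∞`, so that `F = f ∘ r` off the origin and
`Lip F (x) ≤ Lip f (r x) · Lip r (x)`. Near `x ≠ 0` the sup norm of `y` is attained at a
coordinate `i` with `|x i| = ‖x‖_∞` and `y i` of the sign of `x i`; then
`r y - r x = (h - h_i • x / x_i) / ‖y‖_∞` with `h = y - x`. The map `h ↦ h - h_i • x / x_i` is a
projection of norm at most `|x| / |x_i|`, hence `Lip r (x) ≤ |x| / ‖x‖_∞²`, and `|x|² ≤ j ‖x‖_∞²`.
-/

open Set Topology

section LipNum

variable {E E' N : Type*}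

theorem lipNumOn_congr [PseudoEMetricSpace E] [PseudoEMetricSpace N] {F G : E → N}
    {s : Set E} {x : E} (h : EqOn F G (insert x s)) :
    lipNumOn F s x = lipNumOn G s x := by
  refine limsup_congr (eventually_nhdsWithin_of_forall fun y hy => ?_)
  rw [h (mem_insert_of_mem x hy.1), h (mem_insert x s)]

theorem lipNumOn_le_of_eventually_le [PseudoMetricSpace E] [PseudoMetricSpace N] {g : E → N}
    {s : Set E} {x : E} {c : E → ℝ} (hc : ContinuousAt c x)
    (h : ∀ᶠ y in 𝓝 x, dist (g y) (g x) ≤ c y * dist y x) :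
    lipNumOn g s x ≤ ENNReal.ofReal (c x) := by
  have hlim : limsup (fun y => ENNReal.ofReal (c y)) (𝓝 x) = ENNReal.ofReal (c x) :=
    (ENNReal.continuous_ofReal.continuousAt.comp hc).tendsto.limsup_eq
  calc lipNumOn g s x
      ≤ limsup (fun y => ENNReal.ofReal (c y)) (𝓝[s \ {x}] x) := by
        refine limsup_le_limsup (h.filter_mono nhdsWithin_le_nhds |>.mono fun y hy => ?_)
        refine ENNReal.div_le_of_le_mul ?_
        rw [edist_dist, edist_dist, ← ENNReal.ofReal_mul' dist_nonneg]
        exact ENNReal.ofReal_le_ofReal hy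
    _ ≤ limsup (fun y => ENNReal.ofReal (c y)) (𝓝 x) := limsup_le_limsup_of_le nhdsWithin_le_nhds
    _ = ENNReal.ofReal (c x) := hlim

theorem lipNumOn_comp_le [PseudoEMetricSpace E] [MetricSpace E'] [PseudoEMetricSpace N]
    {f : E' → N} {g : E → E'} {s : Set E} {t : Set E'} {x : E}
    (hg : ContinuousWithinAt g s x) (hst : MapsTo g s t)
    (hf_ne_top : lipNumOn f t (g x) ≠ ⊤) (hg_ne_top : lipNumOn g s x ≠ ⊤) :
    lipNumOn (f ∘ g) s x ≤ lipNumOn f t (g x) * lipNumOn g s x := by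
  set l := 𝓝[s \ {x}] x
  set G : E' → ℝ≥0∞ := fun z => edist (f z) (f (g x)) / edist z (g x)
  have hG : limsup (G ∘ g) l ≤ lipNumOn f t (g x) := by
    have htend : Tendsto g l (𝓝[t \ {g x}] (g x) ⊔ pure (g x)) := by
      rw [sup_comm, ← nhdsWithin_insert, insert_sdiff_singleton]
      exact ((tendsto_nhdsWithin_iff.2 ⟨hg, eventually_nhdsWithin_of_forall hst⟩).mono_left
        (nhdsWithin_mono x sdiff_subset)).mono_right (nhdsWithin_mono _ (subset_insert _ _))
    calc limsup (G ∘ g) l ≤ limsup G (𝓝[t \ {g x}] (g x) ⊔ pure (g x)) :=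
          (limsup_comp G g l).trans_le (limsup_le_limsup_of_le htend)
      _ ≤ lipNumOn f t (g x) := by
          rw [limsup_sup_filter]
          refine sup_le le_rfl (limsup_le_of_le (by isBoundedDefault) ?_)
          simp [G]
  have hratio : ∀ᶠ y in l, edist (f (g y)) (f (g x)) / edist y x
      ≤ G (g y) * (edist (g y) (g x) / edist y x) := by
    refine eventually_nhdsWithin_of_forall fun y _ => ?_
    rcases eq_or_ne (g y) (g x) with hyx | hyx
    · simp [hyx]
    · rw [← mul_div_assoc, ENNReal.div_mul_cancel ((edist_pos.2 hyx).ne') (edist_ne_top _ _)]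
  calc lipNumOn (f ∘ g) s x ≤ limsup ((G ∘ g) * fun y => edist (g y) (g x) / edist y x) l :=
        limsup_le_limsup hratio
    _ ≤ limsup (G ∘ g) l * lipNumOn g s x :=
        ENNReal.limsup_mul_le' (Or.inr hg_ne_top) (Or.inl (ne_top_of_le_ne_top hf_ne_top hG))
    _ ≤ lipNumOn f t (g x) * lipNumOn g s x := by gcongr

end LipNum

section SupNorm

variable {j : ℕ}

theorem EuclideanSpace.neZero_of_ne_zero {x : EuclideanSpace ℝ (Fin j)} (hx : x ≠ 0) : NeZero j :=
  ⟨by rintro rfl; exact hx (Subsingleton.elim _ _)⟩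

theorem abs_apply_le_supNorm (x : EuclideanSpace ℝ (Fin j)) (i : Fin j) : |x i| ≤ supNorm x :=
  norm_le_pi_norm (WithLp.equiv 2 (Fin j → ℝ) x) i

theorem supNorm_smul (c : ℝ) (x : EuclideanSpace ℝ (Fin j)) :
    supNorm (c • x) = |c| * supNorm x :=
  norm_smul c (WithLp.equiv 2 (Fin j → ℝ) x)

theorem supNorm_pos {x : EuclideanSpace ℝ (Fin j)} (hx : x ≠ 0) : 0 < supNorm x :=
  norm_pos_iff.2 fun h => hx ((WithLp.equiv 2 (Fin j → ℝ)).injective (by simpa using h))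

theorem continuous_supNorm : Continuous (supNorm (j := j)) :=
  continuous_norm.comp (PiLp.continuous_ofLp 2 _)

theorem exists_supNorm_eq_abs [NeZero j] (x : EuclideanSpace ℝ (Fin j)) :
    ∃ i, supNorm x = |x i| := by
  obtain ⟨i, hi⟩ := Finite.exists_max fun i => |x i|
  exact ⟨i, le_antisymm ((pi_norm_le_iff_of_nonneg (abs_nonneg _)).2 hi)
    (abs_apply_le_supNorm x i)⟩

theorem norm_sq_le_card_mul_supNorm_sq (x : EuclideanSpace ℝ (Fin j)) :
    ‖x‖ ^ 2 ≤ j * supNorm x ^ 2 := by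
  rw [EuclideanSpace.norm_sq_eq]
  calc ∑ i, ‖x i‖ ^ 2 ≤ ∑ _i : Fin j, supNorm x ^ 2 :=
        Finset.sum_le_sum fun i _ => pow_le_pow_left₀ (norm_nonneg _) (abs_apply_le_supNorm x i) 2
    _ = j * supNorm x ^ 2 := by simp

theorem eventually_exists_supNorm_eq_abs {x : EuclideanSpace ℝ (Fin j)} (hx : x ≠ 0) :
    ∀ᶠ y in 𝓝 x, ∃ i, supNorm x = |x i| ∧ supNorm y = |y i| ∧ 0 < x i * y i := by
  have := EuclideanSpace.neZero_of_ne_zero hx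
  have hcoord (i : Fin j) : Continuous fun y : EuclideanSpace ℝ (Fin j) => y i := by fun_prop
  have horder : ∀ᶠ y in 𝓝 x, ∀ i k, |x i| < |x k| → |y i| < |y k| :=
    eventually_all.2 fun i => eventually_all.2 fun k => by
      by_cases hik : |x i| < |x k|
      · exact ((hcoord i).abs.continuousAt.eventually_lt (hcoord k).abs.continuousAt hik).mono
          fun y hy _ => hy
      · exact Eventually.of_forall fun y h => absurd h hik
  have hsign : ∀ᶠ y in 𝓝 x, ∀ i, x i ≠ 0 → 0 < x i * y i :=
    eventually_all.2 fun i => by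
      by_cases hi : x i = 0
      · exact Eventually.of_forall fun y h => absurd hi h
      · exact (continuousAt_const.eventually_lt ((continuous_const.mul (hcoord i)).continuousAt)
          (mul_self_pos.2 hi)).mono fun y hy _ => hy
  filter_upwards [horder, hsign] with y horder hsign
  obtain ⟨i, hi⟩ := exists_supNorm_eq_abs y
  obtain ⟨k, hk⟩ := exists_supNorm_eq_abs x
  have hxi : supNorm x = |x i| := by
    refine le_antisymm ?_ (abs_apply_le_supNorm x i)
    by_contra! hlt
    exact (horder i k (hk ▸ hlt)).not_ge (hi ▸ abs_apply_le_supNorm y k)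
  have hxi0 : x i ≠ 0 := abs_pos.1 (hxi ▸ supNorm_pos hx)
  exact ⟨i, hxi, hi, hsign i hxi0⟩

end SupNorm

open scoped RealInnerProductSpace in
theorem norm_sub_inner_smul_le {V : Type*} [NormedAddCommGroup V] [InnerProductSpace ℝ V]
    {a e : V} (he : ‖e‖ = 1) (hae : ⟪a, e⟫ = 1) (h : V) :
    ‖h - ⟪h, e⟫ • a‖ ≤ ‖a‖ * ‖h‖ := by
  have hee : ⟪e, e⟫ = 1 := by rw [real_inner_self_eq_norm_sq, he, one_pow]
  have hea : ⟪e, a⟫ = 1 := real_inner_comm a e ▸ hae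
  have heh : ⟪e, h⟫ = ⟪h, e⟫ := real_inner_comm h e
  have hah : ⟪a, h⟫ = ⟪h, a⟫ := real_inner_comm h a
  -- Cauchy–Schwarz for the components of `h` and `a` orthogonal to `e`
  have hcs := real_inner_mul_inner_self_le (h - ⟪h, e⟫ • e) (a - e)
  simp only [inner_sub_left, inner_sub_right, real_inner_smul_left, real_inner_smul_right,
    hae, hea, heh, hee] at hcs
  rw [← sq_le_sq₀ (norm_nonneg _) (by positivity), mul_pow, ← real_inner_self_eq_norm_sq,
    ← real_inner_self_eq_norm_sq, ← real_inner_self_eq_norm_sq]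
  simp only [inner_sub_left, inner_sub_right, real_inner_smul_left, real_inner_smul_right, hah]
  nlinarith [sq_nonneg ⟪h, a⟫]

section RadialProj

variable {j : ℕ}

noncomputable def radialProj (x : EuclideanSpace ℝ (Fin j)) : EuclideanSpace ℝ (Fin j) :=
  (supNorm x)⁻¹ • x

theorem supNorm_radialProj {x : EuclideanSpace ℝ (Fin j)} (hx : x ≠ 0) :
    supNorm (radialProj x) = 1 := by
  rw [radialProj, supNorm_smul, abs_inv, abs_of_pos (supNorm_pos hx),
    inv_mul_cancel₀ (supNorm_pos hx).ne']

theorem continuousAt_radialProj {x : EuclideanSpace ℝ (Fin j)} (hx : x ≠ 0) :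
    ContinuousAt radialProj x :=
  (continuous_supNorm.continuousAt.inv₀ (supNorm_pos hx).ne').smul continuousAt_id

theorem radialProj_sub_radialProj {x y : EuclideanSpace ℝ (Fin j)} {i : Fin j}
    (hx : supNorm x = |x i|) (hy : supNorm y = |y i|) (hxy : 0 < x i * y i) :
    radialProj y - radialProj x
      = (supNorm y)⁻¹ • ((y - x) - (y - x) i • (x i)⁻¹ • x) := by
  have hxi : x i ≠ 0 := left_ne_zero_of_mul hxy.ne'
  have hpos : 0 < y i / x i := by
    simpa only [mul_div_mul_left _ _ hxi] using div_pos hxy (mul_self_pos.2 hxi)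
  have hinv : (supNorm x)⁻¹ = (supNorm y)⁻¹ * (y i / x i) := by
    have hyi : |y i| ≠ 0 := abs_ne_zero.2 (right_ne_zero_of_mul hxy.ne')
    rw [hx, hy, ← abs_of_pos hpos, abs_div, div_eq_mul_inv, inv_mul_cancel_left₀ hyi]
  rw [radialProj, radialProj, hinv, PiLp.sub_apply]
  match_scalars <;> field_simp
  ring

theorem eventually_norm_radialProj_sub_le {x : EuclideanSpace ℝ (Fin j)} (hx : x ≠ 0) :
    ∀ᶠ y in 𝓝 x, ‖radialProj y - radialProj x‖ ≤ ‖x‖ / (supNorm x * supNorm y) * ‖y - x‖ := by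
  filter_upwards [eventually_exists_supNorm_eq_abs hx] with y ⟨i, hxi, hyi, hxy⟩
  have hxi0 : x i ≠ 0 := left_ne_zero_of_mul hxy.ne'
  have hproj := norm_sub_inner_smul_le (e := EuclideanSpace.single i 1) (a := (x i)⁻¹ • x)
    (by simp) (by simp [EuclideanSpace.inner_single_right, hxi0]) (y - x)
  rw [EuclideanSpace.inner_single_right, one_mul, conj_trivial, norm_smul, norm_inv,
    Real.norm_eq_abs, ← hxi] at hproj
  have hy0 : 0 < supNorm y := hyi ▸ abs_pos.2 (right_ne_zero_of_mul hxy.ne')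
  rw [radialProj_sub_radialProj hxi hyi hxy, norm_smul, norm_inv, Real.norm_eq_abs,
    abs_of_pos hy0]
  calc (supNorm y)⁻¹ * ‖y - x - (y - x) i • (x i)⁻¹ • x‖
      ≤ (supNorm y)⁻¹ * ((supNorm x)⁻¹ * ‖x‖ * ‖y - x‖) := by gcongr
    _ = ‖x‖ / (supNorm x * supNorm y) * ‖y - x‖ := by field_simp

theorem lipNumOn_radialProj_le {x : EuclideanSpace ℝ (Fin j)} (hx : x ≠ 0)
    (s : Set (EuclideanSpace ℝ (Fin j))) :
    lipNumOn radialProj s x ≤ ENNReal.ofReal (‖x‖ / supNorm x ^ 2) := by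
  have hm := supNorm_pos hx
  rw [sq]
  refine lipNumOn_le_of_eventually_le (c := fun y => ‖x‖ / (supNorm x * supNorm y)) ?_ ?_
  · exact continuousAt_const.div (continuousAt_const.mul continuous_supNorm.continuousAt)
      (mul_pos hm hm).ne'
  · simpa only [dist_eq_norm] using eventually_norm_radialProj_sub_le hx

end RadialProj

theorem stmt0_general {j : ℕ} {N : Type*} [MetricSpace N]
    (f F : EuclideanSpace ℝ (Fin j) → N)
    (hF : ∀ x : EuclideanSpace ℝ (Fin j), x ≠ 0 → F x = f ((supNorm x)⁻¹ • x))
    (x : EuclideanSpace ℝ (Fin j)) (hx0 : x ≠ 0) :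
    ENNReal.ofReal ‖x‖ * lipNumOn F {y | supNorm y ≤ 1 ∧ y ≠ 0} x
      ≤ (j : ℝ≥0∞) *
        ⨆ y ∈ {y : EuclideanSpace ℝ (Fin j) | supNorm y = 1},
          lipNumOn f {z | supNorm z = 1} y := by
  set s := {y : EuclideanSpace ℝ (Fin j) | supNorm y ≤ 1 ∧ y ≠ 0}
  set t := {z : EuclideanSpace ℝ (Fin j) | supNorm z = 1}
  have hj : (j : ℝ≥0∞) ≠ 0 := Nat.cast_ne_zero.2 (EuclideanSpace.neZero_of_ne_zero hx0).out
  have hLip : lipNumOn f t (radialProj x) ≤ ⨆ y ∈ t, lipNumOn f t y :=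
    le_iSup₂_of_le (radialProj x) (supNorm_radialProj hx0) le_rfl
  rcases eq_or_ne (⨆ y ∈ t, lipNumOn f t y) ⊤ with htop | htop
  · rw [htop, ENNReal.mul_top hj]
    exact le_top
  have hFr : EqOn F (f ∘ radialProj) (insert x s) := by
    rintro y (rfl | hy)
    exacts [hF y hx0, hF y hy.2]
  have hr := lipNumOn_radialProj_le hx0 s
  have hcomp := lipNumOn_comp_le (f := f) (continuousAt_radialProj hx0).continuousWithinAt
    (fun y hy => supNorm_radialProj hy.2) (ne_top_of_le_ne_top htop hLip)
    (ne_top_of_le_ne_top ENNReal.ofReal_ne_top hr)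
  calc ENNReal.ofReal ‖x‖ * lipNumOn F s x
      = ENNReal.ofReal ‖x‖ * lipNumOn (f ∘ radialProj) s x := by rw [lipNumOn_congr hFr]
    _ ≤ ENNReal.ofReal ‖x‖ *
          (lipNumOn f t (radialProj x) * ENNReal.ofReal (‖x‖ / supNorm x ^ 2)) := by
        gcongr
        exact hcomp.trans (by gcongr)
    _ = ENNReal.ofReal (‖x‖ ^ 2 / supNorm x ^ 2) * lipNumOn f t (radialProj x) := by
        rw [mul_comm (lipNumOn f t _), ← mul_assoc, ← ENNReal.ofReal_mul (norm_nonneg x),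
          ← mul_div_assoc, ← sq]
    _ ≤ j * ⨆ y ∈ t, lipNumOn f t y := by
        gcongr
        rw [← ENNReal.ofReal_natCast]
        refine ENNReal.ofReal_le_ofReal ((div_le_iff₀ (pow_pos (supNorm_pos hx0) 2)).2 ?_)
        exact norm_sq_le_card_mul_supNorm_sq x

/-- Homogeneous extension: if `F x = f (x / ‖x‖_∞)` on the punctured cube, then
`|x| · Lip F (x) ≤ j · sup_{y ∈ ∂Q^j} Lip f (y)`. -/
theorem stmt0 {j : ℕ} (hj : 2 ≤ j) {N : Type*} [MetricSpace N]
    (f F : EuclideanSpace ℝ (Fin j) → N)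
    (hF : ∀ x : EuclideanSpace ℝ (Fin j), x ≠ 0 → F x = f ((supNorm x)⁻¹ • x))
    (x : EuclideanSpace ℝ (Fin j)) (hx0 : x ≠ 0) (hxQ : supNorm x ≤ 1) :
    ENNReal.ofReal ‖x‖ * lipNumOn F {y | supNorm y ≤ 1 ∧ y ≠ 0} x
      ≤ (j : ℝ≥0∞) *
        ⨆ y ∈ {y : EuclideanSpace ℝ (Fin j) | supNorm y = 1},
          lipNumOn f {z | supNorm z = 1} y :=
  stmt0_general f F hF x hx0
end

section
/- Let j ≥ 2, let f : ∂Q^j → N be a map to a metric space N, let A ⊆ ∂Q^j be nonempty, and let A* = { t·x : x ∈ A, t ∈ [0,1] } be the cone over A. Define F : Q^j \ {0} → N by F(x) = f(x/|x|_∞). Then sup_{x ∈ Q^j \ {0}} dist(x, A*) · Lip F(x) ≤ √j · sup_{y ∈ ∂Q^j} dist(y, A) · Lip f(y). -/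
open Filter

open scoped ENNReal

/-!
Write `π x = x / |x|_∞` for the radial projection onto `∂Q^j`, so that `F = f ∘ π`. If
`|x|_∞ ≤ |y|_∞`, then `|x|_∞ (π x - π y) = x - (|x|_∞ / |y|_∞) y`. Coordinatewise this vector is
shorter than `x - y` by exactly `|y|_∞ - |x|_∞` at a coordinate `k` with `|y_k| = |y|_∞`, and longer
by at most that elsewhere; Cauchy–Schwarz then gives
`min(|x|_∞, |y|_∞) |π x - π y| ≤ √j |x - y|`. Hence `Lip π(x) ≤ √j / |x|_∞` and, by the chain rule
for Lipschitz numbers, `Lip F(x) ≤ (√j / |x|_∞) Lip f(π x)`. Since `|x|_∞ • A` lies in the cone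
`A*`, also `dist(x, A*) ≤ |x|_∞ dist(π x, A)`, and the factors `|x|_∞` cancel.
-/

open Set Metric Topology
open scoped Pointwise

section LipschitzNumber

variable {E M N : Type*}

theorem lipNumOn_le_of_eventually [PseudoEMetricSpace E] [PseudoEMetricSpace N] {g : E → N}
    {s : Set E} {x : E} {c : ℝ≥0∞}
    (h : ∀ᶠ y in 𝓝[s \ {x}] x, edist (g y) (g x) ≤ c * edist y x) : lipNumOn g s x ≤ c :=
  limsup_le_of_le (by isBoundedDefault) (h.mono fun _ hy => ENNReal.div_le_of_le_mul hy)

theorem lipNumOn_le_ofReal [PseudoMetricSpace E] [PseudoMetricSpace N] {g : E → N}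
    {s : Set E} {x : E} {c : ℝ}
    (h : ∀ c' > c, ∀ᶠ y in 𝓝[s \ {x}] x, dist (g y) (g x) ≤ c' * dist y x) :
    lipNumOn g s x ≤ ENNReal.ofReal c := by
  refine le_of_forall_gt_imp_ge_of_dense fun b hb => ?_
  obtain ⟨c', hc'0, hcc', hc'b⟩ := ENNReal.lt_iff_exists_real_btwn.1 hb
  refine (lipNumOn_le_of_eventually ((h c' (ENNReal.ofReal_lt_ofReal_iff'.1 hcc').1).mono
    fun y hy => ?_)).trans hc'b.le
  rw [edist_dist, edist_dist, ← ENNReal.ofReal_mul hc'0]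
  exact ENNReal.ofReal_le_ofReal hy

theorem eventually_edist_le_of_lipNumOn_lt [EMetricSpace E] [PseudoEMetricSpace N] {g : E → N}
    {s : Set E} {x : E} {c : ℝ≥0∞} (h : lipNumOn g s x < c) :
    ∀ᶠ y in 𝓝[s] x, edist (g y) (g x) ≤ c * edist y x := by
  have h' := eventually_lt_of_limsup_lt h
  rw [eventually_nhdsWithin_iff] at h' ⊢
  filter_upwards [h'] with y hy hys
  rcases eq_or_ne y x with rfl | hne
  · simp
  · exact (ENNReal.div_le_iff_le_mul (Or.inl (edist_pos.2 hne).ne')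
      (Or.inr (zero_le.trans_lt h).ne')).1 (hy ⟨hys, hne⟩).le

theorem tendsto_nhds_of_lipNumOn_ne_top [EMetricSpace E] [PseudoEMetricSpace N] {g : E → N}
    {s : Set E} {x : E} (h : lipNumOn g s x ≠ ⊤) : Tendsto g (𝓝[s \ {x}] x) (𝓝 (g x)) := by
  obtain ⟨c, hgc, hc⟩ := exists_between h.lt_top
  have hlin : Tendsto (fun y => c * edist y x) (𝓝[s \ {x}] x) (𝓝 0) := by
    have hdist : Tendsto (fun y => edist y x) (𝓝 x) (𝓝 0) := by
      simpa using (continuous_id.edist (continuous_const : Continuous fun _ : E => x)).tendsto x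
    simpa using ENNReal.Tendsto.const_mul (hdist.mono_left nhdsWithin_le_nhds) (Or.inr hc.ne)
  exact tendsto_iff_edist_tendsto_0.2 <| tendsto_of_tendsto_of_tendsto_of_le_of_le'
    tendsto_const_nhds hlin (Eventually.of_forall fun _ => zero_le)
    ((eventually_edist_le_of_lipNumOn_lt hgc).filter_mono (nhdsWithin_mono _ sdiff_subset))

theorem lipNumOn_comp_le_s1 [EMetricSpace E] [EMetricSpace M] [PseudoEMetricSpace N]
    {f : M → N} {g : E → M} {F : E → N} {s : Set E} {t : Set M} {x : E} {c : ℝ≥0∞}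
    (hx : x ∈ s) (hF : EqOn F (f ∘ g) s) (hg : MapsTo g s t) (hgc : lipNumOn g s x ≤ c)
    (hc0 : c ≠ 0) (hc : c ≠ ⊤) : lipNumOn F s x ≤ lipNumOn f t (g x) * c := by
  refine ENNReal.le_mul_of_forall_lt (Or.inr hc) (Or.inr hc0) fun b hb c' hc' =>
    lipNumOn_le_of_eventually ?_
  have hgt : Tendsto g (𝓝[s \ {x}] x) (𝓝[t] (g x)) :=
    tendsto_nhdsWithin_iff.2 ⟨tendsto_nhds_of_lipNumOn_ne_top (ne_top_of_le_ne_top hc hgc),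
      eventually_mem_nhdsWithin.mono fun y hy => hg hy.1⟩
  filter_upwards [hgt.eventually (eventually_edist_le_of_lipNumOn_lt hb),
    (eventually_edist_le_of_lipNumOn_lt (hgc.trans_lt hc')).filter_mono
      (nhdsWithin_mono _ sdiff_subset), self_mem_nhdsWithin] with y hfy hgy hy
  rw [hF hy.1, hF hx, mul_assoc]
  exact hfy.trans (by gcongr)

end LipschitzNumber

open Finset in
theorem sum_sq_le_card_mul_sum_sq_of_abs_le {ι : Type*} [Fintype ι] {v d : ι → ℝ} {t : ℝ}
    (k : ι) (ht : 0 ≤ t) (hk : |v k| + t = |d k|) (hv : ∀ m, |v m| ≤ |d m| + t) :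
    ∑ m, v m ^ 2 ≤ Fintype.card ι * ∑ m, d m ^ 2 := by
  classical
  obtain ⟨n, hn⟩ : ∃ n : ℝ, #(univ.erase k) = n := ⟨_, rfl⟩
  have hcard : (Fintype.card ι : ℝ) = n + 1 := by
    rw [← hn, card_erase_of_mem (mem_univ k), card_univ,
      Nat.cast_sub (Fintype.card_pos_iff.2 ⟨k⟩), Nat.cast_one, sub_add_cancel]
  have hn0 : 0 ≤ n := hn ▸ Nat.cast_nonneg _
  set S := ∑ m ∈ univ.erase k, |d m|
  set D := ∑ m ∈ univ.erase k, d m ^ 2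
  have hrest : ∑ m ∈ univ.erase k, v m ^ 2 ≤ D + 2 * t * S + n * t ^ 2 := calc
    _ ≤ ∑ m ∈ univ.erase k, (|d m| + t) ^ 2 := sum_le_sum fun m _ => by
        rw [← sq_abs]; exact pow_le_pow_left₀ (abs_nonneg _) (hv m) 2
    _ = ∑ m ∈ univ.erase k, (d m ^ 2 + 2 * t * |d m| + t ^ 2) :=
        sum_congr rfl fun m _ => by rw [add_sq, sq_abs]; ring
    _ = D + 2 * t * S + n * t ^ 2 := by
        rw [sum_add_distrib, sum_add_distrib, ← mul_sum, sum_const, nsmul_eq_mul, hn]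
  have hCS : S ^ 2 ≤ n * D := by
    simpa only [sq_abs, hn] using
      sq_sum_le_card_mul_sum_sq (s := univ.erase k) (f := fun m => |d m|)
  have htd : t ≤ |d k| := by linarith [abs_nonneg (v k)]
  have hvk : v k ^ 2 = (|d k| - t) ^ 2 := by rw [← sq_abs, ← hk]; ring
  rw [← add_sum_erase _ _ (mem_univ k), ← add_sum_erase _ _ (mem_univ k), hcard, hvk,
    ← sq_abs (d k)]
  -- `2tS ≤ t² + S² ≤ t² + nD`, and `(a - t)² + (n + 1)t² ≤ (n + 1)a²` for `a = |d k| ≥ t`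
  -- because the difference is `(a - t)(na + (n + 2)t)`.
  nlinarith [sq_nonneg (S - t), mul_nonneg (sub_nonneg.2 htd)
    (add_nonneg (mul_nonneg hn0 (abs_nonneg (d k))) (mul_nonneg (by linarith : (0:ℝ) ≤ n + 2) ht))]

namespace supNorm

variable {j : ℕ}

theorem eq_norm_ofLp (x : EuclideanSpace ℝ (Fin j)) : supNorm x = ‖WithLp.ofLp x‖ := rfl

theorem nonneg (x : EuclideanSpace ℝ (Fin j)) : 0 ≤ supNorm x := norm_nonneg _

theorem abs_apply_le (x : EuclideanSpace ℝ (Fin j)) (i : Fin j) : |x i| ≤ supNorm x :=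
  norm_le_pi_norm (WithLp.ofLp x) i

theorem exists_abs_apply_eq {x : EuclideanSpace ℝ (Fin j)} (hx : x ≠ 0) :
    ∃ k, |x k| = supNorm x := by
  obtain ⟨i, -⟩ : ∃ i, x i ≠ 0 := by
    by_contra! h
    exact hx (by ext i; simp [h])
  have : Nonempty (Fin j) := ⟨i⟩
  obtain ⟨k, -, hk⟩ := Finset.exists_max_image Finset.univ (fun i => |x i|) Finset.univ_nonempty
  exact ⟨k, le_antisymm (abs_apply_le x k)
    ((pi_norm_le_iff_of_nonneg (abs_nonneg _)).2 fun i => hk i (Finset.mem_univ i))⟩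

theorem smul (c : ℝ) (x : EuclideanSpace ℝ (Fin j)) : supNorm (c • x) = |c| * supNorm x := by
  rw [eq_norm_ofLp, WithLp.ofLp_smul, norm_smul, Real.norm_eq_abs, eq_norm_ofLp]

theorem pos {x : EuclideanSpace ℝ (Fin j)} (hx : x ≠ 0) : 0 < supNorm x :=
  norm_pos_iff.2 (by simpa using hx)

theorem continuous : Continuous (supNorm : EuclideanSpace ℝ (Fin j) → ℝ) :=
  (PiLp.continuous_ofLp 2 _).norm

theorem smul_inv_smul_self (x : EuclideanSpace ℝ (Fin j)) :
    supNorm x • (supNorm x)⁻¹ • x = x := by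
  rcases eq_or_ne x 0 with rfl | hx
  · simp
  · exact smul_inv_smul₀ (pos hx).ne' x

theorem inv_smul_self {x : EuclideanSpace ℝ (Fin j)} (hx : x ≠ 0) :
    supNorm ((supNorm x)⁻¹ • x) = 1 := by
  rw [smul, abs_inv, abs_of_pos (pos hx), inv_mul_cancel₀ (pos hx).ne']

end supNorm

section RadialProjection

variable {j : ℕ}

theorem norm_sub_smul_le_sqrt_mul_norm_sub {x y : EuclideanSpace ℝ (Fin j)} (hy : y ≠ 0)
    (hxy : supNorm x ≤ supNorm y) :
    ‖x - (supNorm x / supNorm y) • y‖ ≤ √j * ‖x - y‖ := by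
  obtain ⟨k, hk⟩ := supNorm.exists_abs_apply_eq hy
  have hR := supNorm.pos hy
  set r := supNorm x
  set R := supNorm y
  have hsR : r / R * R = r := div_mul_cancel₀ r hR.ne'
  have hs1 : r / R ≤ 1 := (div_le_one hR).2 hxy
  have hxk := abs_le.1 (supNorm.abs_apply_le x k)
  have hvk : |x k - r / R * y k| + (R - r) = |x k - y k| := by
    rcases (abs_eq hR.le).1 hk with h | h
    · rw [h, hsR, abs_of_nonpos (by linarith), abs_of_nonpos (by linarith)]
      ring
    · rw [h, mul_neg, hsR, abs_of_nonneg (by linarith), abs_of_nonneg (by linarith)]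
      ring
  have hv : ∀ m, |x m - r / R * y m| ≤ |x m - y m| + (R - r) := fun m => calc
    |x m - r / R * y m| = |(x m - y m) + (1 - r / R) * y m| := by ring_nf
    _ ≤ |x m - y m| + (1 - r / R) * R := by
      refine (abs_add_le _ _).trans ?_
      rw [abs_mul, abs_of_nonneg (sub_nonneg.2 hs1)]
      exact add_le_add le_rfl
        (mul_le_mul_of_nonneg_left (supNorm.abs_apply_le y m) (sub_nonneg.2 hs1))
    _ = |x m - y m| + (R - r) := by rw [sub_mul, one_mul, hsR]
  have hsq : ‖x - (r / R) • y‖ ^ 2 ≤ j * ‖x - y‖ ^ 2 := by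
    rw [EuclideanSpace.real_norm_sq_eq, EuclideanSpace.real_norm_sq_eq]
    simpa using sum_sq_le_card_mul_sum_sq_of_abs_le k (sub_nonneg.2 hxy) hvk hv
  calc ‖x - (r / R) • y‖ = √(‖x - (r / R) • y‖ ^ 2) := (Real.sqrt_sq (norm_nonneg _)).symm
    _ ≤ √(j * ‖x - y‖ ^ 2) := Real.sqrt_le_sqrt hsq
    _ = √j * ‖x - y‖ := by rw [Real.sqrt_mul (Nat.cast_nonneg _), Real.sqrt_sq (norm_nonneg _)]

theorem min_supNorm_mul_norm_inv_smul_sub_le {x y : EuclideanSpace ℝ (Fin j)} (hx : x ≠ 0)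
    (hy : y ≠ 0) :
    min (supNorm x) (supNorm y) * ‖(supNorm x)⁻¹ • x - (supNorm y)⁻¹ • y‖ ≤ √j * ‖x - y‖ := by
  wlog hxy : supNorm x ≤ supNorm y generalizing x y
  · simpa only [min_comm, norm_sub_rev] using this hy hx (le_of_not_ge hxy)
  have hscale : supNorm x • ((supNorm x)⁻¹ • x - (supNorm y)⁻¹ • y) =
      x - (supNorm x / supNorm y) • y := by
    rw [smul_sub, supNorm.smul_inv_smul_self, smul_smul, div_eq_mul_inv]
  calc _ = ‖x - (supNorm x / supNorm y) • y‖ := by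
        rw [← hscale, norm_smul, Real.norm_of_nonneg (supNorm.nonneg x), min_eq_left hxy]
    _ ≤ √j * ‖x - y‖ := norm_sub_smul_le_sqrt_mul_norm_sub hy hxy

theorem lipNumOn_inv_smul_le {s : Set (EuclideanSpace ℝ (Fin j))} {x : EuclideanSpace ℝ (Fin j)}
    (hx : x ≠ 0) :
    lipNumOn (fun y => (supNorm y)⁻¹ • y) s x ≤ ENNReal.ofReal (√j / supNorm x) := by
  refine lipNumOn_le_ofReal fun c hc => ?_
  have hr := supNorm.pos hx
  have hcr : √j < c * supNorm x := (div_lt_iff₀ hr).1 hc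
  have hc0 : 0 < c := (div_nonneg (Real.sqrt_nonneg _) hr.le).trans_lt hc
  have hev : ∀ᶠ y in 𝓝 x, √j < c * supNorm y :=
    ((continuous_const.mul supNorm.continuous).tendsto x).eventually (lt_mem_nhds hcr)
  filter_upwards [nhdsWithin_le_nhds hev] with y hy
  have hy0 : y ≠ 0 := by
    rintro rfl
    simp [supNorm.eq_norm_ofLp] at hy
    exact (Real.sqrt_nonneg _).not_gt hy
  have hm : 0 < min (supNorm y) (supNorm x) := lt_min (supNorm.pos hy0) hr
  have hcm : √j ≤ c * min (supNorm y) (supNorm x) := by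
    rw [mul_min_of_nonneg _ _ hc0.le]
    exact le_min hy.le hcr.le
  rw [dist_eq_norm, dist_eq_norm]
  refine le_of_mul_le_mul_left ?_ hm
  calc min (supNorm y) (supNorm x) * ‖(supNorm y)⁻¹ • y - (supNorm x)⁻¹ • x‖
      ≤ √j * ‖y - x‖ := min_supNorm_mul_norm_inv_smul_sub_le hy0 hx
    _ ≤ c * min (supNorm y) (supNorm x) * ‖y - x‖ := by gcongr
    _ = min (supNorm y) (supNorm x) * (c * ‖y - x‖) := by ring

theorem lipNumOn_radial_le {N : Type*} [MetricSpace N] {f F : EuclideanSpace ℝ (Fin j) → N}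
    (hF : ∀ x : EuclideanSpace ℝ (Fin j), x ≠ 0 → F x = f ((supNorm x)⁻¹ • x))
    {x : EuclideanSpace ℝ (Fin j)} (hx : x ≠ 0) (hx1 : supNorm x ≤ 1) :
    lipNumOn F {y | supNorm y ≤ 1 ∧ y ≠ 0} x ≤
      ENNReal.ofReal (√j / supNorm x) * lipNumOn f {z | supNorm z = 1} ((supNorm x)⁻¹ • x) := by
  obtain ⟨k, -⟩ := supNorm.exists_abs_apply_eq hx
  have hc0 : ENNReal.ofReal (√j / supNorm x) ≠ 0 := (ENNReal.ofReal_pos.2 (div_pos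
    (Real.sqrt_pos.2 (Nat.cast_pos.2 k.pos)) (supNorm.pos hx))).ne'
  rw [mul_comm]
  exact lipNumOn_comp_le_s1 (g := fun y => (supNorm y)⁻¹ • y) ⟨hx1, hx⟩ (fun y hy => hF y hy.2)
    (fun y hy => supNorm.inv_smul_self hy.2) (lipNumOn_inv_smul_le hx) hc0 ENNReal.ofReal_ne_top

theorem infDist_cone_le {A : Set (EuclideanSpace ℝ (Fin j))} (hA : A.Nonempty)
    {x : EuclideanSpace ℝ (Fin j)} (hx : x ≠ 0) (hx1 : supNorm x ≤ 1) :
    infDist x {y | ∃ a ∈ A, ∃ t ∈ Icc (0:ℝ) 1, y = t • a} ≤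
      supNorm x * infDist ((supNorm x)⁻¹ • x) A := by
  have hr := supNorm.pos hx
  calc infDist x {y | ∃ a ∈ A, ∃ t ∈ Icc (0:ℝ) 1, y = t • a}
      ≤ infDist x (supNorm x • A) := by
        refine infDist_le_infDist_of_subset ?_ (hA.smul_set)
        rintro _ ⟨a, ha, rfl⟩
        exact ⟨a, ha, supNorm x, ⟨hr.le, hx1⟩, rfl⟩
    _ = supNorm x * infDist ((supNorm x)⁻¹ • x) A := by
        have h := infDist_smul₀ hr.ne' A ((supNorm x)⁻¹ • x)
        rwa [supNorm.smul_inv_smul_self, Real.norm_of_nonneg hr.le] at h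

end RadialProjection

theorem stmt1_general {j : ℕ} {N : Type*} [MetricSpace N]
    (f F : EuclideanSpace ℝ (Fin j) → N)
    (A : Set (EuclideanSpace ℝ (Fin j)))
    (hA : A.Nonempty)
    (hF : ∀ x : EuclideanSpace ℝ (Fin j), x ≠ 0 → F x = f ((supNorm x)⁻¹ • x)) :
    (⨆ x ∈ {y : EuclideanSpace ℝ (Fin j) | supNorm y ≤ 1 ∧ y ≠ 0},
        ENNReal.ofReal
            (Metric.infDist x {y | ∃ a ∈ A, ∃ t ∈ Set.Icc (0:ℝ) 1, y = t • a}) *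
          lipNumOn F {y | supNorm y ≤ 1 ∧ y ≠ 0} x)
      ≤ ENNReal.ofReal (Real.sqrt j) *
        ⨆ y ∈ {y : EuclideanSpace ℝ (Fin j) | supNorm y = 1},
          ENNReal.ofReal (Metric.infDist y A) * lipNumOn f {z | supNorm z = 1} y := by
  refine iSup₂_le fun x ⟨hx1, hx⟩ => ?_
  have hr := supNorm.pos hx
  set u := (supNorm x)⁻¹ • x
  have hcancel : ENNReal.ofReal (supNorm x * infDist u A) * ENNReal.ofReal (√j / supNorm x) =
      ENNReal.ofReal √j * ENNReal.ofReal (infDist u A) := by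
    rw [← ENNReal.ofReal_mul (mul_nonneg hr.le infDist_nonneg),
      ← ENNReal.ofReal_mul (Real.sqrt_nonneg _)]
    congr 1
    field_simp
  calc _ ≤ ENNReal.ofReal (supNorm x * infDist u A) *
          (ENNReal.ofReal (√j / supNorm x) * lipNumOn f {z | supNorm z = 1} u) := by
        gcongr
        exacts [infDist_cone_le hA hx hx1, lipNumOn_radial_le hF hx hx1]
    _ = ENNReal.ofReal √j * (ENNReal.ofReal (infDist u A) * lipNumOn f {z | supNorm z = 1} u) := by
        rw [← mul_assoc, hcancel, mul_assoc]
    _ ≤ _ := by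
        gcongr
        exact le_iSup₂_of_le (f := fun y (_ : supNorm y = 1) =>
          ENNReal.ofReal (infDist y A) * lipNumOn f {z | supNorm z = 1} y) u
          (supNorm.inv_smul_self hx) le_rfl

/-- Homogeneous extension, weighted estimate: with `A ⊆ ∂Q^j` nonempty and
`A* = {t·a : a ∈ A, t ∈ [0,1]}` the cone over `A`,
`sup_{x ∈ Q^j \ {0}} dist(x, A*)·Lip F(x) ≤ √j · sup_{y ∈ ∂Q^j} dist(y, A)·Lip f(y)`. -/
theorem stmt1 {j : ℕ} (hj : 2 ≤ j) {N : Type*} [MetricSpace N]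
    (f F : EuclideanSpace ℝ (Fin j) → N)
    (A : Set (EuclideanSpace ℝ (Fin j)))
    (hA : A.Nonempty) (hAQ : A ⊆ {y | supNorm y = 1})
    (hF : ∀ x : EuclideanSpace ℝ (Fin j), x ≠ 0 → F x = f ((supNorm x)⁻¹ • x)) :
    (⨆ x ∈ {y : EuclideanSpace ℝ (Fin j) | supNorm y ≤ 1 ∧ y ≠ 0},
        ENNReal.ofReal
            (Metric.infDist x {y | ∃ a ∈ A, ∃ t ∈ Set.Icc (0:ℝ) 1, y = t • a}) *
          lipNumOn F {y | supNorm y ≤ 1 ∧ y ≠ 0} x)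
      ≤ ENNReal.ofReal (Real.sqrt j) *
        ⨆ y ∈ {y : EuclideanSpace ℝ (Fin j) | supNorm y = 1},
          ENNReal.ofReal (Metric.infDist y A) * lipNumOn f {z | supNorm z = 1} y :=
  stmt1_general f F A hA hF
end

section
/- Let N ⊆ ℝ^ν be a compact subset for which there exist δ_N > 0 and a Lipschitz retraction Π : {y ∈ ℝ^ν : dist(y, N) ≤ δ_N} → N with Π|_N = id. Let j ≥ 1. Then for every α > 0 there exists β > 0 such that for every continuous map F : Q^j → N whose restriction to ∂Q^j is α-Lipschitz, there exists a β-Lipschitz map G : Q^j → N with G|_{∂Q^j} = F|_{∂Q^j}. -/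
open scoped NNReal

/-!
A single map `F` already has some Lipschitz extension `G`: approximate `F` uniformly by a
smooth map, push the approximation back into `N` with the retraction `Π` to get a Lipschitz
`g : Q → N`, and correct `g` near the boundary by `G = Π (g + ρ (w))`, where `w` is a Lipschitz
extension of `F - g` from the boundary and `ρ` the radial retraction onto the `δ`-ball.
The Lipschitz constant of the correction only depends on `α` and on that of `g`.

Uniformity comes from compactness: up to an error `η`, the values of `F` on a finite `η`-net of
the boundary are one of finitely many records in a finite `η`-net of `N`. Fix one Lipschitz
witness `g` for each record that occurs; the witness of the record of `F` is `δ`-close to `F` on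
the boundary, so correcting it instead gives a constant independent of `F`.
-/

open Set Metric Filter

section BallRetraction

variable {V : Type*} [NormedAddCommGroup V] [NormedSpace ℝ V]

noncomputable def ballRetraction (r : ℝ) (v : V) : V := (r / max r ‖v‖) • v

lemma norm_ballRetraction_le {r : ℝ} (hr : 0 ≤ r) (v : V) : ‖ballRetraction r v‖ ≤ r := by
  rcases eq_or_ne v 0 with rfl | hv
  · simpa [ballRetraction] using hr
  have hpos : 0 < max r ‖v‖ := lt_max_of_lt_right (norm_pos_iff.2 hv)
  rw [ballRetraction, norm_smul, Real.norm_eq_abs, abs_div, abs_of_nonneg hr,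
    abs_of_pos hpos, div_mul_eq_mul_div, div_le_iff₀ hpos]
  exact mul_le_mul_of_nonneg_left (le_max_right _ _) hr

lemma ballRetraction_of_norm_le {r : ℝ} {v : V} (hv : ‖v‖ ≤ r) : ballRetraction r v = v := by
  rcases (norm_nonneg v).trans hv |>.eq_or_lt with rfl | hr
  · simp [norm_le_zero_iff.1 hv, ballRetraction]
  · rw [ballRetraction, max_eq_left hv, div_self hr.ne', one_smul]

lemma lipschitzWith_ballRetraction {r : ℝ} (hr : 0 < r) :
    LipschitzWith 2 (ballRetraction r : V → V) := by
  refine LipschitzWith.of_dist_le_mul fun x y => ?_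
  set a := max r ‖x‖
  set b := max r ‖y‖
  have ha : 0 < a := lt_max_of_lt_left hr
  have hb : 0 < b := lt_max_of_lt_left hr
  have hra : r / a ≤ 1 := (div_le_one ha).2 (le_max_left _ _)
  have hab : |b - a| ≤ ‖x - y‖ := by
    simp only [a, b, max_comm r]
    exact (abs_max_sub_max_le_abs _ _ _).trans (norm_sub_rev x y ▸ abs_norm_sub_norm_le y x)
  have hscale : (r / a - r / b) * b = r / a * (b - a) := by field_simp
  have h₂ : ‖(r / a - r / b) • y‖ ≤ ‖x - y‖ := calc
    ‖(r / a - r / b) • y‖ ≤ |r / a - r / b| * b := by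
      rw [norm_smul, Real.norm_eq_abs]; gcongr; exact le_max_right _ _
    _ = |r / a * (b - a)| := by rw [← hscale, abs_mul, abs_of_pos hb]
    _ ≤ ‖x - y‖ := by
      rw [abs_mul, abs_of_pos (div_pos hr ha)]
      exact (mul_le_of_le_one_left (abs_nonneg _) hra).trans hab
  have h₁ : ‖(r / a) • (x - y)‖ ≤ ‖x - y‖ := by
    rw [norm_smul, Real.norm_of_nonneg (div_pos hr ha).le]
    exact mul_le_of_le_one_left (norm_nonneg _) hra
  calc dist (ballRetraction r x) (ballRetraction r y)
      = ‖(r / a) • (x - y) + (r / a - r / b) • y‖ := by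
        rw [dist_eq_norm, smul_sub, sub_smul, sub_add_sub_cancel]; rfl
    _ ≤ 2 * dist x y := (norm_add_le _ _).trans (by rw [dist_eq_norm]; linarith)

end BallRetraction

lemma dist_le_of_dist_le_on_net {X Y : Type*} [PseudoMetricSpace X] [PseudoMetricSpace Y]
    {S T : Set X} {F g : X → Y} {α : ℝ≥0} {η : ℝ} (hTS : T ⊆ S) (hST : S ⊆ ⋃ t ∈ T, ball t η)
    (hF : LipschitzOnWith α F S) (hg : LipschitzOnWith α g S)
    (hT : ∀ t ∈ T, dist (F t) (g t) ≤ 2 * η) {x : X} (hx : x ∈ S) :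
    dist (F x) (g x) ≤ 2 * (α + 1) * η := by
  obtain ⟨t, ht, hxt⟩ := mem_iUnion₂.1 (hST hx)
  have hαxt : α * dist x t ≤ α * η := by gcongr; exact (mem_ball.1 hxt).le
  calc dist (F x) (g x) ≤ dist (F x) (F t) + dist (F t) (g t) + dist (g t) (g x) :=
        dist_triangle4 _ _ _ _
    _ ≤ α * dist x t + 2 * η + α * dist t x := by
        gcongr
        · exact hF.dist_le_mul x hx t (hTS ht)
        · exact hT t ht
        · exact hg.dist_le_mul t (hTS ht) x hx
    _ ≤ 2 * (α + 1) * η := by rw [dist_comm t x]; linarith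

structure IsLipschitzNbhdRetraction {V : Type*} [NormedAddCommGroup V] (N : Set V) (δ : ℝ)
    (K : ℝ≥0) (p : V → V) : Prop where
  lipschitzOnWith : LipschitzOnWith K p {y | infDist y N ≤ δ}
  mapsTo : MapsTo p {y | infDist y N ≤ δ} N
  eqOn : EqOn p id N

section

variable {E V : Type*} [NormedAddCommGroup E] [NormedSpace ℝ E] [FiniteDimensional ℝ E]
  [NormedAddCommGroup V] [NormedSpace ℝ V] [FiniteDimensional ℝ V]

lemma Continuous.exists_lipschitzWith_dist_lt {X : Set E} {F : X → V} (hF : Continuous F)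
    (hX : IsCompact X) {ε : ℝ} (hε : 0 < ε) :
    ∃ (L : ℝ≥0) (g : X → V), LipschitzWith L g ∧ ∀ x, dist (g x) (F x) < ε := by
  obtain ⟨F', hF'⟩ := ContinuousMap.exists_restrict_eq hX.isClosed ⟨F, hF⟩
  obtain ⟨g, hg, hgF', -⟩ := F'.continuous.exists_contDiff_approx 1 continuous_const fun _ => hε
  obtain ⟨L, hL⟩ := hg.locallyLipschitz.locallyLipschitzOn.exists_lipschitzOnWith_of_compact hX
  refine ⟨L, X.domRestrict g, hL.to_restrict, fun x => ?_⟩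
  have hF'x : F' x = F x := DFunLike.congr_fun hF' x
  exact hF'x ▸ hgF' x

namespace IsLipschitzNbhdRetraction

variable {N : Set V} {δ : ℝ} {K : ℝ≥0} {p : V → V}

lemma exists_lipschitzWith_dist_le (hp : IsLipschitzNbhdRetraction N δ K p) (hδ : 0 < δ)
    {X : Set E} (hX : IsCompact X) {F : X → V} (hF : Continuous F) (hFN : ∀ x, F x ∈ N)
    {ε : ℝ} (hε : 0 < ε) :
    ∃ (L : ℝ≥0) (g : X → V), LipschitzWith L g ∧ (∀ x, g x ∈ N) ∧ ∀ x, dist (g x) (F x) ≤ ε := by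
  set ε₀ := min δ (ε / (K + 1))
  obtain ⟨L, g₀, hg₀, hg₀F⟩ := hF.exists_lipschitzWith_dist_lt hX (by positivity : 0 < ε₀)
  have hFmem : ∀ x, F x ∈ {y | infDist y N ≤ δ} := fun x => by
    simp [infDist_zero_of_mem (hFN x), hδ.le]
  have hg₀mem : ∀ x, g₀ x ∈ {y | infDist y N ≤ δ} := fun x =>
    (infDist_le_dist_of_mem (hFN x)).trans ((hg₀F x).le.trans (min_le_left _ _))
  refine ⟨K * L, p ∘ g₀, ?_, fun x => hp.mapsTo (hg₀mem x), fun x => ?_⟩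
  · exact lipschitzOnWith_univ.1
      (hp.lipschitzOnWith.comp hg₀.lipschitzOnWith fun x _ => hg₀mem x)
  calc dist (p (g₀ x)) (F x) = dist (p (g₀ x)) (p (F x)) := by rw [hp.eqOn (hFN x), id]
    _ ≤ K * dist (g₀ x) (F x) := hp.lipschitzOnWith.dist_le_mul _ (hg₀mem x) _ (hFmem x)
    _ ≤ K * (ε / (K + 1)) := by gcongr; exact (hg₀F x).le.trans (min_le_right _ _)
    _ ≤ ε := by
        rw [mul_div_assoc', div_le_iff₀ (by positivity)]
        nlinarith [K.2]

lemma exists_lipschitzWith_eqOn_of_dist_le (hp : IsLipschitzNbhdRetraction N δ K p) (hδ : 0 < δ)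
    {X : Type*} [PseudoMetricSpace X] {S : Set X} {g F : X → V} {L α : ℝ≥0}
    (hg : LipschitzWith L g) (hgN : ∀ x, g x ∈ N) (hF : LipschitzOnWith α F S)
    (hFN : ∀ x ∈ S, F x ∈ N) (hFg : ∀ x ∈ S, dist (F x) (g x) ≤ δ) :
    ∃ G : X → V, LipschitzWith (K * (L + 2 * (lipschitzExtensionConstant V * (α + L)))) G ∧
      (∀ x, G x ∈ N) ∧ EqOn G F S := by
  obtain ⟨w, hw, hFgw⟩ := (hF.add hg.lipschitzOnWith.neg).extend_finite_dimension
  have hmem : ∀ x, g x + ballRetraction δ (w x) ∈ {y | infDist y N ≤ δ} := fun x =>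
    (infDist_le_dist_of_mem (hgN x)).trans
      (by rw [dist_self_add_left]; exact norm_ballRetraction_le hδ.le _)
  refine ⟨fun x => p (g x + ballRetraction δ (w x)), ?_, fun x => hp.mapsTo (hmem x),
    fun x hx => ?_⟩
  · exact lipschitzOnWith_univ.1 (hp.lipschitzOnWith.comp
      (hg.add ((lipschitzWith_ballRetraction hδ).comp hw)).lipschitzOnWith fun x _ => hmem x)
  have hw : w x = F x - g x := (hFgw hx).symm.trans (sub_eq_add_neg _ _).symm
  have hwδ : ‖F x - g x‖ ≤ δ := dist_eq_norm (F x) (g x) ▸ hFg x hx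
  show p (g x + ballRetraction δ (w x)) = F x
  rw [hw, ballRetraction_of_norm_le hwδ, add_sub_cancel]
  exact hp.eqOn (hFN x hx)

lemma exists_lipschitzWith_extension (hp : IsLipschitzNbhdRetraction N δ K p) (hδ : 0 < δ)
    {X : Set E} (hX : IsCompact X) {S : Set X} {F : X → V} (hF : Continuous F)
    (hFN : ∀ x, F x ∈ N) {α : ℝ≥0} (hFS : LipschitzOnWith α F S) :
    ∃ (L : ℝ≥0) (G : X → V), LipschitzWith L G ∧ (∀ x, G x ∈ N) ∧ EqOn G F S := by
  obtain ⟨L, g, hg, hgN, hgF⟩ := hp.exists_lipschitzWith_dist_le hδ hX hF hFN hδ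
  exact ⟨_, hp.exists_lipschitzWith_eqOn_of_dist_le hδ hg hgN hFS (fun x _ => hFN x)
    fun x _ => dist_comm (F x) (g x) ▸ hgF x⟩

theorem exists_uniform_lipschitzWith_extension (hp : IsLipschitzNbhdRetraction N δ K p)
    (hδ : 0 < δ) (hN : IsCompact N) {X : Set E} (hX : IsCompact X) (S : Set X) (α : ℝ≥0) :
    ∃ β : ℝ≥0, ∀ F : X → V, Continuous F → (∀ x, F x ∈ N) → LipschitzOnWith α F S →
      ∃ G : X → V, LipschitzWith β G ∧ (∀ x, G x ∈ N) ∧ EqOn G F S := by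
  have : CompactSpace X := isCompact_iff_compactSpace.1 hX
  set η := δ / (2 * (α + 1))
  have hη : 0 < η := by positivity
  obtain ⟨T, hTS, hT, hST⟩ :=
    finite_approx_of_totallyBounded (isCompact_univ.totallyBounded.subset (subset_univ S)) η hη
  obtain ⟨D, -, hD, hND⟩ := finite_approx_of_totallyBounded hN.totallyBounded η hη
  have := hT.to_subtype
  have := hD.to_subtype
  let Witness (L : ℝ≥0) (q : T → D) : Prop := ∃ g : X → V, LipschitzWith L g ∧
    (∀ x, g x ∈ N) ∧ LipschitzOnWith α g S ∧ ∀ t : T, dist (g t) (q t) < η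
  have hwitness : ∀ q, ∀ᶠ L in atTop, (∃ L', Witness L' q) → Witness L q := fun q => by
    by_cases hq : ∃ L', Witness L' q
    · obtain ⟨L', g, hg, hwit⟩ := hq
      filter_upwards [eventually_ge_atTop L'] with L hL _ using ⟨g, hg.weaken hL, hwit⟩
    · exact Eventually.of_forall fun _ h => absurd h hq
  obtain ⟨L, hL⟩ := (eventually_all.2 hwitness).exists
  refine ⟨K * (L + 2 * (lipschitzExtensionConstant V * (α + L))), fun F hF hFN hFS => ?_⟩
  have hq : ∀ t : T, ∃ d : D, dist (F t) d < η := fun t => by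
    obtain ⟨d, hd, hFd⟩ := mem_iUnion₂.1 (hND (hFN t))
    exact ⟨⟨d, hd⟩, hFd⟩
  choose q hq using hq
  obtain ⟨g, hg, hgN, hgS, hgq⟩ : Witness L q := by
    refine hL q ?_
    obtain ⟨L', G, hG, hGN, hGF⟩ := hp.exists_lipschitzWith_extension hδ hX hF hFN hFS
    refine ⟨L', G, hG, hGN, fun x hx y hy => ?_, fun t => hGF (hTS t.2) ▸ hq t⟩
    rw [hGF hx, hGF hy]
    exact hFS hx hy
  refine hp.exists_lipschitzWith_eqOn_of_dist_le hδ hg hgN hFS (fun x _ => hFN x) fun x hx => ?_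
  have hFg : ∀ t ∈ T, dist (F t) (g t) ≤ 2 * η := fun t ht => by
    linarith [dist_triangle_right (F t) (g t) (q ⟨t, ht⟩), hq ⟨t, ht⟩, hgq ⟨t, ht⟩]
  calc dist (F x) (g x) ≤ 2 * (α + 1) * η := dist_le_of_dist_le_on_net hTS hST hFS hgS hFg hx
    _ = δ := by simp only [η]; field_simp

end IsLipschitzNbhdRetraction

end

lemma isCompact_setOf_supNorm_le_one (j : ℕ) :
    IsCompact {x : EuclideanSpace ℝ (Fin j) | supNorm x ≤ 1} := by
  convert (EuclideanSpace.equiv (Fin j) ℝ).toHomeomorph.isCompact_preimage.2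
    (isCompact_closedBall (0 : Fin j → ℝ) 1) using 1
  ext
  exact mem_closedBall_zero_iff.symm

theorem stmt5_general {ν : ℕ} (N : Set (EuclideanSpace ℝ (Fin ν))) (hN : IsCompact N)
    (δ : ℝ) (hδ : 0 < δ) (Pi' : EuclideanSpace ℝ (Fin ν) → EuclideanSpace ℝ (Fin ν))
    (K : ℝ≥0) (hPilip : LipschitzOnWith K Pi' {y | Metric.infDist y N ≤ δ})
    (hPimaps : Set.MapsTo Pi' {y | Metric.infDist y N ≤ δ} N)
    (hPiid : Set.EqOn Pi' id N)
    (j : ℕ) :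
    ∀ α : ℝ≥0, 0 < α → ∃ β : ℝ≥0, 0 < β ∧
      ∀ F : {x : EuclideanSpace ℝ (Fin j) // supNorm x ≤ 1} → EuclideanSpace ℝ (Fin ν),
        Continuous F → (∀ x, F x ∈ N) →
        LipschitzOnWith α F
          {x : {x : EuclideanSpace ℝ (Fin j) // supNorm x ≤ 1} |
            supNorm (x : EuclideanSpace ℝ (Fin j)) = 1} →
        ∃ G : {x : EuclideanSpace ℝ (Fin j) // supNorm x ≤ 1} → EuclideanSpace ℝ (Fin ν),
          LipschitzWith β G ∧ (∀ x, G x ∈ N) ∧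
          Set.EqOn G F
            {x : {x : EuclideanSpace ℝ (Fin j) // supNorm x ≤ 1} |
              supNorm (x : EuclideanSpace ℝ (Fin j)) = 1} := by
  intro α _
  obtain ⟨β, hβ⟩ := IsLipschitzNbhdRetraction.exists_uniform_lipschitzWith_extension
    ⟨hPilip, hPimaps, hPiid⟩ hδ hN (isCompact_setOf_supNorm_le_one j) _ α
  refine ⟨β + 1, by positivity, fun F hF hFN hFS => ?_⟩
  obtain ⟨G, hG, hGN, hGF⟩ := hβ F hF hFN hFS
  exact ⟨G, hG.weaken le_self_add, hGN, hGF⟩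

/-- Lipschitz filling: if `N ⊆ ℝ^ν` is compact and admits a Lipschitz neighbourhood
retraction, then for every `α > 0` there is `β > 0` such that every continuous
`F : Q^j → N` whose restriction to `∂Q^j` is `α`-Lipschitz admits a `β`-Lipschitz map
`G : Q^j → N` agreeing with `F` on `∂Q^j`. -/
theorem stmt5 {ν : ℕ} (N : Set (EuclideanSpace ℝ (Fin ν))) (hN : IsCompact N)
    (δ : ℝ) (hδ : 0 < δ) (Pi' : EuclideanSpace ℝ (Fin ν) → EuclideanSpace ℝ (Fin ν))
    (K : ℝ≥0) (hPilip : LipschitzOnWith K Pi' {y | Metric.infDist y N ≤ δ})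
    (hPimaps : Set.MapsTo Pi' {y | Metric.infDist y N ≤ δ} N)
    (hPiid : Set.EqOn Pi' id N)
    (j : ℕ) (hj : 1 ≤ j) :
    ∀ α : ℝ≥0, 0 < α → ∃ β : ℝ≥0, 0 < β ∧
      ∀ F : {x : EuclideanSpace ℝ (Fin j) // supNorm x ≤ 1} → EuclideanSpace ℝ (Fin ν),
        Continuous F → (∀ x, F x ∈ N) →
        LipschitzOnWith α F
          {x : {x : EuclideanSpace ℝ (Fin j) // supNorm x ≤ 1} |
            supNorm (x : EuclideanSpace ℝ (Fin j)) = 1} →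
        ∃ G : {x : EuclideanSpace ℝ (Fin j) // supNorm x ≤ 1} → EuclideanSpace ℝ (Fin ν),
          LipschitzWith β G ∧ (∀ x, G x ∈ N) ∧
          Set.EqOn G F
            {x : {x : EuclideanSpace ℝ (Fin j) // supNorm x ≤ 1} |
              supNorm (x : EuclideanSpace ℝ (Fin j)) = 1} :=
  stmt5_general N hN δ hδ Pi' K hPilip hPimaps hPiid j
end

section
/- Let m ≥ 2 and set κ = 2(1 + √(m-1)). Let Ω ⊆ ℝ^{m-1} be open and define the tents Ω̂ = {(x', x_m) ∈ ℝ^{m-1} × (0,∞) : closure(B^{m-1}_{x_m}(x')) ⊆ Ω} and Ω̂^κ = {(x', x_m) : closure(B^{m-1}_{κ x_m}(x')) ⊆ Ω}. Suppose Q = Q' × [2^k, 2^{k+1}] where Q' ⊆ ℝ^{m-1} is a cube of edge-length 2^k with sides parallel to the axes. If Q ∩ Ω̂^κ ≠ ∅, then Q ⊆ Ω̂. -/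
open Set

/-- A Whitney dyadic cube `Q = Q' × [2^k, 2^{k+1}]` (edge `2^k`) that meets the narrow
tent `Ω̂^κ` with `κ = 2(1+√(m-1))` is entirely contained in the wide tent `Ω̂`. -/
theorem stmt15 (m : ℕ) (hm : 2 ≤ m)
    (Ω : Set (EuclideanSpace ℝ (Fin (m - 1)))) (hΩ : IsOpen Ω)
    (k : ℤ) (a : Fin (m - 1) → ℝ)
    (Q : Set (EuclideanSpace ℝ (Fin (m - 1)) × ℝ))
    (hQ : Q = {p | (∀ i, p.1 i ∈ Icc (a i) (a i + (2:ℝ) ^ k)) ∧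
      p.2 ∈ Icc ((2:ℝ) ^ k) ((2:ℝ) ^ (k + 1))})
    (hmeet : ∃ p ∈ Q, 0 < p.2 ∧
      Metric.closedBall p.1 ((2 * (1 + Real.sqrt ((m - 1 : ℕ) : ℝ))) * p.2) ⊆ Ω) :
    ∀ p ∈ Q, 0 < p.2 ∧ Metric.closedBall p.1 p.2 ⊆ Ω := by
  obtain ⟨q, hqQ, hq2, hball⟩ := hmeet
  subst hQ
  obtain ⟨hq1, hq2a, hq2b⟩ := hqQ
  intro p hp
  obtain ⟨hp1, hp2a, hp2b⟩ := hp
  have h2k : (0:ℝ) < (2:ℝ) ^ k := zpow_pos (by norm_num) k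
  have hs : (0:ℝ) ≤ Real.sqrt ((m - 1 : ℕ) : ℝ) := Real.sqrt_nonneg _
  refine ⟨lt_of_lt_of_le h2k hp2a, ?_⟩
  -- distance between the horizontal coordinates
  have hdist : dist p.1 q.1 ≤ Real.sqrt ((m - 1 : ℕ) : ℝ) * (2:ℝ) ^ k := by
    rw [EuclideanSpace.dist_eq]
    have hsum : ∑ i, dist (p.1 i) (q.1 i) ^ 2 ≤ ((m - 1 : ℕ) : ℝ) * ((2:ℝ) ^ k) ^ 2 := by
      calc ∑ i, dist (p.1 i) (q.1 i) ^ 2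
          ≤ ∑ _i : Fin (m - 1), ((2:ℝ) ^ k) ^ 2 := by
            refine Finset.sum_le_sum fun i _ => ?_
            have hd : dist (p.1 i) (q.1 i) ≤ (2:ℝ) ^ k := by
              have h1 := hp1 i; have h2 := hq1 i
              rw [Real.dist_eq, abs_le]
              constructor <;> [linarith [h1.1, h1.2, h2.1, h2.2];
                linarith [h1.1, h1.2, h2.1, h2.2]]
            exact pow_le_pow_left₀ dist_nonneg hd 2
        _ = ((m - 1 : ℕ) : ℝ) * ((2:ℝ) ^ k) ^ 2 := by
            simp [Finset.sum_const, Finset.card_univ]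
    calc Real.sqrt (∑ i, dist (p.1 i) (q.1 i) ^ 2)
        ≤ Real.sqrt (((m - 1 : ℕ) : ℝ) * ((2:ℝ) ^ k) ^ 2) := Real.sqrt_le_sqrt hsum
      _ = Real.sqrt ((m - 1 : ℕ) : ℝ) * (2:ℝ) ^ k := by
          rw [Real.sqrt_mul (by positivity), Real.sqrt_sq h2k.le]
  refine subset_trans ?_ hball
  intro z hz
  simp only [Metric.mem_closedBall] at hz ⊢
  have h2k1 : (2:ℝ) ^ (k + 1) = 2 * (2:ℝ) ^ k := by
    rw [zpow_add_one₀ (by norm_num : (2:ℝ) ≠ 0)]; ring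
  calc dist z q.1 ≤ dist z p.1 + dist p.1 q.1 := dist_triangle _ _ _
    _ ≤ (2:ℝ) ^ (k + 1) + Real.sqrt ((m - 1 : ℕ) : ℝ) * (2:ℝ) ^ k := by
        exact add_le_add (le_trans hz hp2b) hdist
    _ ≤ (2 * (1 + Real.sqrt ((m - 1 : ℕ) : ℝ))) * q.2 := by
        have : (2 * (1 + Real.sqrt ((m - 1 : ℕ) : ℝ))) * (2:ℝ) ^ k ≤
            (2 * (1 + Real.sqrt ((m - 1 : ℕ) : ℝ))) * q.2 := by
          apply mul_le_mul_of_nonneg_left hq2a; positivity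
        nlinarith [mul_nonneg hs h2k.le]
end
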